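/- arXiv:2111.07315 — 2 statements merged into one kernel-verified Lean document; each statement's English description precedes it below -/
import Mathlib

section
/- (Douglas factorization, range inclusion direction) Let H, H₁, H₂ be Hilbert spaces and T₁ ∈ B(H₁, H), T₂ ∈ B(H₂, H). If there exists λ ≥ 0 with T₁T₁* ≤ λ²T₂T₂*, then Range(T₁) ⊆ Range(T₂). -/
/-!
The hypothesis says exactly that `‖T₁* f‖ ≤ λ ‖T₂* f‖`. Hence, for `x ∈ H₁`, the functional
`f ↦ ⟪T₁ x, f⟫ = ⟪x, T₁* f⟫` factors through `T₂*` via a functional bounded on `Range(T₂*)`.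
Extending it to `H₂` by Hahn–Banach and representing it by Riesz gives `z` with
`⟪z, T₂* f⟫ = ⟪T₁ x, f⟫` for all `f`, i.e. `T₂ z = T₁ x`.
-/

open ComplexOrder

open scoped InnerProductSpace InnerProduct

namespace ContinuousLinearMap

variable {𝕜 E F : Type*} [RCLike 𝕜]

section Factorization

variable [NormedAddCommGroup E] [NormedSpace 𝕜 E] [NormedAddCommGroup F] [NormedSpace 𝕜 F]

theorem exists_comp_eq_of_norm_le (S : E →L[𝕜] F) (φ : StrongDual 𝕜 E) (C : ℝ)
    (h : ∀ x, ‖φ x‖ ≤ C * ‖S x‖) : ∃ g : StrongDual 𝕜 F, g ∘L S = φ := by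
  let S' : E →ₗ[𝕜] F := S
  have hker : LinearMap.ker S' ≤ LinearMap.ker (φ : E →ₗ[𝕜] 𝕜) := fun x hx =>
    norm_le_zero_iff.mp <| by simpa [show S x = 0 from hx] using h x
  let ψ : LinearMap.range S' →ₗ[𝕜] 𝕜 :=
    (LinearMap.ker S').liftQ φ hker ∘ₗ S'.quotKerEquivRange.symm.toLinearMap
  have hψ : ∀ x, ψ ⟨S' x, LinearMap.mem_range_self S' x⟩ = φ x := fun x => by
    simp only [ψ, LinearMap.comp_apply, LinearEquiv.coe_toLinearMap,
      LinearMap.quotKerEquivRange_symm_apply_image, Submodule.liftQ_apply, Submodule.mkQ_apply]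
    rfl
  have hψ_le : ∀ u, ‖ψ u‖ ≤ C * ‖u‖ := by
    rintro ⟨_, x, rfl⟩
    exact (congrArg norm (hψ x)).trans_le (h x)
  obtain ⟨g, hg, -⟩ := exists_extension_norm_eq _ (ψ.mkContinuous C hψ_le)
  exact ⟨g, ext fun x => (hg _).trans (hψ x)⟩

end Factorization

variable [NormedAddCommGroup E] [InnerProductSpace 𝕜 E] [CompleteSpace E]
  [NormedAddCommGroup F] [InnerProductSpace 𝕜 F] [CompleteSpace F]

theorem range_subset_range_of_norm_adjoint_le {G : Type*} [NormedAddCommGroup G]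
    [InnerProductSpace 𝕜 G] [CompleteSpace G] (A : E →L[𝕜] G) (B : F →L[𝕜] G) (C : ℝ)
    (h : ∀ f, ‖(A†) f‖ ≤ C * ‖(B†) f‖) : Set.range A ⊆ Set.range B := by
  rintro _ ⟨x, rfl⟩
  have hbound : ∀ f, ‖innerSL 𝕜 (A x) f‖ ≤ (‖x‖ * C) * ‖(B†) f‖ := fun f => by
    rw [innerSL_apply_apply, ← adjoint_inner_right, mul_assoc]
    exact (norm_inner_le_norm x _).trans (mul_le_mul_of_nonneg_left (h f) (norm_nonneg x))
  obtain ⟨g, hg⟩ := exists_comp_eq_of_norm_le (B†) (innerSL 𝕜 (A x)) _ hbound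
  refine ⟨(InnerProductSpace.toDual 𝕜 F).symm g, ext_inner_right 𝕜 fun f => ?_⟩
  rw [← adjoint_inner_right, InnerProductSpace.toDual_symm_apply, ← comp_apply, hg,
    innerSL_apply_apply]

theorem re_inner_comp_adjoint_self (T : E →L[𝕜] F) (f : F) :
    RCLike.re ⟪(T ∘L T†) f, f⟫_𝕜 = ‖(T†) f‖ ^ 2 := by
  rw [comp_apply, ← adjoint_inner_right, inner_self_eq_norm_sq]

theorem norm_adjoint_le_of_inner_nonneg {G : Type*} [NormedAddCommGroup G]
    [InnerProductSpace 𝕜 G] [CompleteSpace G] (A : E →L[𝕜] G) (B : F →L[𝕜] G) {c : ℝ}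
    (hc : 0 ≤ c) (f : G)
    (h : 0 ≤ ⟪(((c ^ 2 : ℝ) : 𝕜) • (B ∘L B†) - A ∘L A†) f, f⟫_𝕜) :
    ‖(A†) f‖ ≤ c * ‖(B†) f‖ := by
  have hre := (RCLike.nonneg_iff.mp h).1
  rw [sub_apply, smul_apply, inner_sub_left, inner_smul_left, map_sub, RCLike.conj_ofReal,
    RCLike.re_ofReal_mul, re_inner_comp_adjoint_self, re_inner_comp_adjoint_self] at hre
  refine (pow_le_pow_iff_left₀ (norm_nonneg _) (by positivity) two_ne_zero).mp ?_
  linarith [mul_pow c ‖(B†) f‖ 2]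

end ContinuousLinearMap

/-- Douglas factorization, range inclusion direction:
`T₁T₁* ≤ λ²T₂T₂*` for some `λ ≥ 0` implies `Range(T₁) ⊆ Range(T₂)`. -/
theorem stmt_4 {H H1 H2 : Type*}
    [NormedAddCommGroup H] [InnerProductSpace ℂ H] [CompleteSpace H]
    [NormedAddCommGroup H1] [InnerProductSpace ℂ H1] [CompleteSpace H1]
    [NormedAddCommGroup H2] [InnerProductSpace ℂ H2] [CompleteSpace H2]
    (T1 : H1 →L[ℂ] H) (T2 : H2 →L[ℂ] H)
    (h : ∃ lam : ℝ, 0 ≤ lam ∧ ∀ f : H,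
      (0 : ℂ) ≤ inner ℂ ((((lam ^ 2 : ℝ) : ℂ) • (T2 ∘L T2.adjoint) - T1 ∘L T1.adjoint) f) f) :
    Set.range T1 ⊆ Set.range T2 := by
  obtain ⟨lam, hlam, hpos⟩ := h
  exact T1.range_subset_range_of_norm_adjoint_le T2 lam fun f =>
    T1.norm_adjoint_le_of_inner_nonneg T2 hlam f (hpos f)
end

section
/- Let K ∈ B(L²(ℝ^d)), and suppose {E_{C_m}}_{m∈ℤ} is a frame for L²([−a,a]^d) with bounds A₁, B₁, and g ∈ L²(ℝ^d) is bounded with support in [−a,a]^d satisfying A‖K‖² ≤ Σ_{n∈ℤ^d}|g(t−Bn)|² ≤ B‖K‖⁻² a.e. for constants A, B > 0 and B ∈ GL_d(ℝ). Then {E_{C_m}T_{Bn}g}_{m∈ℤ, n∈ℤ^d} is a K-Weyl-Heisenberg frame for L²(ℝ^d) with bounds A₁A and B₁B‖K‖⁻². -/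
/-!
Translating by `Bn` and conjugating by `ḡ` turns each Gabor coefficient
`⟨f, E_{C_m} T_{Bn} g⟩` into the coefficient `⟨f(· + Bn) ḡ, E_{C_m}⟩` of a function supported in
`[-a, a]^d`, whose squared `L²` norm is `∫ |f(t)|² |g(t - Bn)|² dt`. So for each fixed `n` the frame
property of `{E_{C_m}}` bounds the sum over `m` by `A₁` and `B₁` times this integral. Summing over
`n` (only finitely many translates of the compactly supported `g` meet a given point) gives
`∫ |f|² Σₙ |g(· - Bn)|²`, which the hypothesis on `g` pins between `A‖K‖²‖f‖²` and
`B‖K‖⁻²‖f‖²`; finally `‖K* f‖ ≤ ‖K‖ ‖f‖`.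
-/

open MeasureTheory

/-- The Gabor (Weyl–Heisenberg) system element `E_C T_b g`. -/
noncomputable def gaborFn {d : ℕ} (C b : EuclideanSpace ℝ (Fin d))
    (g : EuclideanSpace ℝ (Fin d) → ℂ) : EuclideanSpace ℝ (Fin d) → ℂ :=
  fun t => Complex.exp (2 * Real.pi * Complex.I * ((inner ℝ C t : ℝ) : ℂ)) * g (t - b)

open Filter Topology ComplexConjugate

lemma MeasureTheory.L2.norm_sq_eq_integral_norm_sq {α 𝕜 E : Type*} [MeasurableSpace α]
    {μ : Measure α} [RCLike 𝕜] [NormedAddCommGroup E] [InnerProductSpace 𝕜 E] (f : Lp E 2 μ) :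
    ‖f‖ ^ 2 = ∫ t, ‖f t‖ ^ 2 ∂μ := by
  rw [← inner_self_eq_norm_sq (𝕜 := 𝕜), L2.inner_def, ← integral_re (L2.integrable_inner f f)]
  simp only [inner_self_eq_norm_sq]

lemma summable_of_frame_lower_bound {X ι : Type*} [MeasurableSpace X] {μ : Measure X}
    {φ : ι → X → ℂ} {h : X → ℂ} {A : ℝ} (hA : 0 < A) (hh : MemLp h 2 μ)
    (hlow : A * ∫ t, ‖h t‖ ^ 2 ∂μ ≤ ∑' m, ‖∫ t, h t * conj (φ m t) ∂μ‖ ^ 2) :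
    Summable fun m => ‖∫ t, h t * conj (φ m t) ∂μ‖ ^ 2 := by
  -- A divergent real series has `tsum` equal to `0`, which forces `h = 0` a.e.
  by_contra hns
  rw [tsum_eq_zero_of_not_summable hns] at hlow
  have hnorm : ∫ t, ‖h t‖ ^ 2 ∂μ = 0 :=
    le_antisymm (by nlinarith) (integral_nonneg fun t => by positivity)
  have hzero : ∀ᵐ t ∂μ, ‖h t‖ ^ 2 = 0 :=
    (integral_eq_zero_iff_of_nonneg (fun t => by positivity)
      (hh.integrable_norm_pow two_ne_zero)).1 hnorm
  have hcoeff (m : ι) : ∫ t, h t * conj (φ m t) ∂μ = 0 :=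
    integral_eq_zero_of_ae (hzero.mono fun t ht => by simp_all)
  simp only [hcoeff, norm_zero, ne_eq, OfNat.ofNat_ne_zero, not_false_eq_true, zero_pow] at hns
  exact hns summable_zero

section Translation

variable {G : Type*} [MeasurableSpace G] [AddGroup G] [MeasurableAdd G] {μ : Measure G}
  [μ.IsAddRightInvariant]

lemma memLp_comp_add_right_mul_conj {p : ENNReal} {F g : G → ℂ} {M : ℝ} (hF : MemLp F p μ)
    (hg : AEStronglyMeasurable g μ) (hM : ∀ t, ‖g t‖ ≤ M) (b : G) :
    MemLp (fun s => F (s + b) * conj (g s)) p μ := by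
  have hFb : MemLp (fun s => F (s + b)) p μ :=
    hF.comp_measurePreserving (measurePreserving_add_right μ b)
  refine hFb.of_le_mul (c := M)
    (hFb.aestronglyMeasurable.mul (Complex.continuous_conj.comp_aestronglyMeasurable hg))
    (.of_forall fun s => ?_)
  rw [norm_mul, RCLike.norm_conj, mul_comm M]
  exact mul_le_mul_of_nonneg_left (hM s) (norm_nonneg _)

lemma integral_norm_sq_comp_add_right_mul_conj (F g : G → ℂ) (b : G) :
    ∫ s, ‖F (s + b) * conj (g s)‖ ^ 2 ∂μ = ∫ t, ‖F t‖ ^ 2 * ‖g (t - b)‖ ^ 2 ∂μ := by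
  rw [← integral_add_right_eq_self (fun t => ‖F t‖ ^ 2 * ‖g (t - b)‖ ^ 2) b]
  simp only [norm_mul, RCLike.norm_conj, mul_pow, add_sub_cancel_right]

end Translation

lemma tsum_prod_bounds_of_fiberwise {ι κ : Type*} {c : ι × κ → ℝ} {I : κ → ℝ} {s A B : ℝ}
    (hc : 0 ≤ c) (hI : HasSum I s) (hfiber : ∀ n, Summable fun m => c (m, n))
    (hlow : ∀ n, A * I n ≤ ∑' m, c (m, n)) (hup : ∀ n, ∑' m, c (m, n) ≤ B * I n) :
    A * s ≤ ∑' p, c p ∧ ∑' p, c p ≤ B * s := by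
  have hS : Summable fun n => ∑' m, c (m, n) :=
    .of_nonneg_of_le (fun n => tsum_nonneg fun m => hc _) hup (hI.summable.mul_left B)
  have hswap : Summable fun q => c (Equiv.prodComm κ ι q) :=
    (summable_prod_of_nonneg (f := fun q => c (Equiv.prodComm κ ι q)) fun _ => hc _).2
      ⟨hfiber, hS⟩
  have hfib : ∑' p, c p = ∑' n, ∑' m, c (m, n) := by
    rw [← (Equiv.prodComm κ ι).tsum_eq c]
    exact hswap.tsum_prod' hfiber
  rw [hfib, ← hI.tsum_eq, ← tsum_mul_left, ← tsum_mul_left]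
  exact ⟨(hI.summable.mul_left A).tsum_le_tsum hlow hS,
    hS.tsum_le_tsum hup (hI.summable.mul_left B)⟩

section WeightedIntegrals

variable {X ι : Type*} [MeasurableSpace X] {μ : Measure X} [Countable ι] {φ : X → ℝ} {w : ι → X → ℝ}

lemma integrable_mul_tsum_of_le {c : ℝ} (hφ : Integrable φ μ) (hφ0 : 0 ≤ φ)
    (hw0 : ∀ n, 0 ≤ w n) (hw : ∀ n, AEStronglyMeasurable (w n) μ) (hle : ∀ᵐ t ∂μ, ∑' n, w n t ≤ c) :
    Integrable (fun t => φ t * ∑' n, w n t) μ := by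
  refine (hφ.mul_const c).mono' (hφ.aestronglyMeasurable.mul (.tsum hw)) ?_
  filter_upwards [hle] with t ht
  rw [Real.norm_of_nonneg (mul_nonneg (hφ0 t) (tsum_nonneg fun n => hw0 n t))]
  exact mul_le_mul_of_nonneg_left ht (hφ0 t)

lemma hasSum_integral_mul_of_tsum_le {c : ℝ} (hφ : Integrable φ μ) (hφ0 : 0 ≤ φ)
    (hw0 : ∀ n, 0 ≤ w n) (hw : ∀ n, AEStronglyMeasurable (w n) μ)
    (hsum : ∀ t, Summable fun n => w n t) (hle : ∀ᵐ t ∂μ, ∑' n, w n t ≤ c) :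
    HasSum (fun n => ∫ t, φ t * w n t ∂μ) (∫ t, φ t * ∑' n, w n t ∂μ) := by
  refine hasSum_integral_of_dominated_convergence (fun n t => φ t * w n t)
    (fun n => hφ.aestronglyMeasurable.mul (hw n))
    (fun n => .of_forall fun t => (Real.norm_of_nonneg (mul_nonneg (hφ0 t) (hw0 n t))).le)
    (.of_forall fun t => (hsum t).mul_left (φ t)) ?_
    (.of_forall fun t => (hsum t).hasSum.mul_left (φ t))
  simpa only [tsum_mul_left] using integrable_mul_tsum_of_le hφ hφ0 hw0 hw hle

lemma exists_hasSum_integral_mul_between {lo hi : ℝ} (hφ : Integrable φ μ) (hφ0 : 0 ≤ φ)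
    (hw0 : ∀ n, 0 ≤ w n) (hw : ∀ n, AEStronglyMeasurable (w n) μ)
    (hsum : ∀ t, Summable fun n => w n t)
    (hbd : ∀ᵐ t ∂μ, lo ≤ ∑' n, w n t ∧ ∑' n, w n t ≤ hi) :
    ∃ s, HasSum (fun n => ∫ t, φ t * w n t ∂μ) s ∧
      lo * ∫ t, φ t ∂μ ≤ s ∧ s ≤ hi * ∫ t, φ t ∂μ := by
  have hle : ∀ᵐ t ∂μ, ∑' n, w n t ≤ hi := hbd.mono fun t ht => ht.2
  have hint := integrable_mul_tsum_of_le hφ hφ0 hw0 hw hle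
  refine ⟨_, hasSum_integral_mul_of_tsum_le hφ hφ0 hw0 hw hsum hle, ?_, ?_⟩
  · rw [← integral_const_mul]
    refine integral_mono_ae (hφ.const_mul lo) hint ?_
    filter_upwards [hbd] with t ht
    rw [mul_comm lo]
    exact mul_le_mul_of_nonneg_left ht.1 (hφ0 t)
  · rw [← integral_const_mul]
    refine integral_mono_ae hint (hφ.const_mul hi) ?_
    filter_upwards [hbd] with t ht
    rw [mul_comm hi]
    exact mul_le_mul_of_nonneg_left ht.2 (hφ0 t)

end WeightedIntegrals

lemma HasCompactSupport.finite_support_comp_sub {X ι M : Type*} [TopologicalSpace X]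
    [AddCommGroup X] [IsTopologicalAddGroup X] [Zero M] {g : X → M} (hg : HasCompactSupport g)
    {φ : ι → X} (hφ : Tendsto φ cofinite (cocompact X)) (t : X) :
    (Function.support fun n => g (t - φ n)).Finite := by
  refine (tendsto_cofinite_cocompact_iff.mp hφ _ (hg.image (continuous_sub_left t))).subset
    fun n hn => ?_
  exact ⟨t - φ n, subset_tsupport _ hn, sub_sub_cancel t (φ n)⟩

lemma tendsto_lattice_cofinite_cocompact {d : ℕ}
    (Bmat : EuclideanSpace ℝ (Fin d) ≃L[ℝ] EuclideanSpace ℝ (Fin d)) :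
    Tendsto (fun n : Fin d → ℤ => Bmat (WithLp.toLp 2 fun i => (n i : ℝ))) cofinite
      (cocompact _) := by
  have hZ : Tendsto (fun n : Fin d → ℤ => fun i => (n i : ℝ)) cofinite (cocompact (Fin d → ℝ)) := by
    rw [← coprodᵢ_cofinite, ← coprodᵢ_cocompact]
    exact Tendsto.pi_map_coprodᵢ fun _ => Int.tendsto_coe_cofinite
  exact ((PiLp.continuousLinearEquiv 2 ℝ _).symm.trans Bmat).toHomeomorph.isClosedEmbedding
    |>.tendsto_cocompact.comp hZ

lemma hasCompactSupport_of_eq_zero_off_cube {d : ℕ} {M : Type*} [Zero M] {a : ℝ}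
    {g : EuclideanSpace ℝ (Fin d) → M}
    (hg : ∀ t : EuclideanSpace ℝ (Fin d), (∃ i, t i ∉ Set.Icc (-a) a) → g t = 0) :
    HasCompactSupport g := by
  refine HasCompactSupport.intro (K := WithLp.ofLp ⁻¹' Set.univ.pi fun _ => Set.Icc (-a) a)
    ((PiLp.homeomorph 2 _).isCompact_preimage.2 (isCompact_univ_pi fun _ => isCompact_Icc))
    fun t ht => hg t ?_
  simpa only [Set.mem_preimage, Set.mem_univ_pi, not_forall] using ht

lemma summable_norm_sq_comp_sub_lattice {d : ℕ} {a : ℝ} {g : EuclideanSpace ℝ (Fin d) → ℂ}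
    (hgsupp : ∀ t : EuclideanSpace ℝ (Fin d), (∃ i, t i ∉ Set.Icc (-a) a) → g t = 0)
    (Bmat : EuclideanSpace ℝ (Fin d) ≃L[ℝ] EuclideanSpace ℝ (Fin d))
    (t : EuclideanSpace ℝ (Fin d)) :
    Summable fun n : Fin d → ℤ => ‖g (t - Bmat (WithLp.toLp 2 fun i => (n i : ℝ)))‖ ^ 2 :=
  summable_of_hasFiniteSupport <|
    ((hasCompactSupport_of_eq_zero_off_cube hgsupp).finite_support_comp_sub
      (tendsto_lattice_cofinite_cocompact Bmat) t).subset
    (Function.support_comp_subset (g := fun z : ℂ => ‖z‖ ^ 2) (by simp) _)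

noncomputable def modulation {E : Type*} [NormedAddCommGroup E] [InnerProductSpace ℝ E]
    (C t : E) : ℂ :=
  Complex.exp (2 * Real.pi * Complex.I * ((inner ℝ C t : ℝ) : ℂ))

section Modulation

variable {E : Type*} [NormedAddCommGroup E] [InnerProductSpace ℝ E]

lemma norm_modulation (C t : E) : ‖modulation C t‖ = 1 := by
  rw [modulation, Complex.norm_exp]
  simp

lemma modulation_add (C x y : E) :
    modulation C (x + y) = modulation C x * modulation C y := by
  rw [modulation, modulation, modulation, ← Complex.exp_add, inner_add_right]
  congr 1
  push_cast
  ring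

end Modulation

/-- `{E_{C_m}}` is a frame with bounds `A₁, B₁` for `L²([-a, a]^d)`, whose elements are modelled
as the functions in `L²(ℝ^d)` vanishing off the cube. -/
def IsExpFrameOnCube {d : ℕ} (a : ℝ) (C : ℤ → EuclideanSpace ℝ (Fin d)) (A1 B1 : ℝ) : Prop :=
  ∀ h : EuclideanSpace ℝ (Fin d) → ℂ, MemLp h 2 volume →
    (∀ t : EuclideanSpace ℝ (Fin d), (∃ i, t i ∉ Set.Icc (-a) a) → h t = 0) →
    A1 * ∫ t, ‖h t‖ ^ 2 ≤ ∑' m, ‖∫ t, h t * conj (modulation (C m) t)‖ ^ 2 ∧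
    ∑' m, ‖∫ t, h t * conj (modulation (C m) t)‖ ^ 2 ≤ B1 * ∫ t, ‖h t‖ ^ 2

lemma norm_integral_mul_conj_gaborFn {d : ℕ} (C b : EuclideanSpace ℝ (Fin d))
    (F g : EuclideanSpace ℝ (Fin d) → ℂ) :
    ‖∫ t, F t * conj (gaborFn C b g t)‖ =
      ‖∫ s, F (s + b) * conj (g s) * conj (modulation C s)‖ := by
  have hshift (s : EuclideanSpace ℝ (Fin d)) : F (s + b) * conj (gaborFn C b g (s + b)) =
      F (s + b) * conj (g s) * conj (modulation C s) * conj (modulation C b) := by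
    change F (s + b) * conj (modulation C (s + b) * g (s + b - b)) = _
    rw [add_sub_cancel_right, modulation_add, map_mul, map_mul]
    ring
  rw [← integral_add_right_eq_self _ b]
  simp only [hshift]
  rw [integral_mul_const, norm_mul, RCLike.norm_conj, norm_modulation, mul_one]

lemma sum_norm_sq_integral_mul_conj_gaborFn_bounds {d : ℕ} {a A1 B1 M : ℝ}
    {C : ℤ → EuclideanSpace ℝ (Fin d)} {g : EuclideanSpace ℝ (Fin d) → ℂ}
    (hframe : IsExpFrameOnCube a C A1 B1) (hA1 : 0 < A1) (hg : AEStronglyMeasurable g volume)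
    (hM : ∀ t, ‖g t‖ ≤ M)
    (hgsupp : ∀ t : EuclideanSpace ℝ (Fin d), (∃ i, t i ∉ Set.Icc (-a) a) → g t = 0)
    (f : Lp ℂ 2 (volume : Measure (EuclideanSpace ℝ (Fin d)))) (b : EuclideanSpace ℝ (Fin d)) :
    Summable (fun m => ‖∫ t, f t * conj (gaborFn (C m) b g t)‖ ^ 2) ∧
    A1 * ∫ t, ‖f t‖ ^ 2 * ‖g (t - b)‖ ^ 2 ≤ ∑' m, ‖∫ t, f t * conj (gaborFn (C m) b g t)‖ ^ 2 ∧
    ∑' m, ‖∫ t, f t * conj (gaborFn (C m) b g t)‖ ^ 2 ≤ B1 * ∫ t, ‖f t‖ ^ 2 * ‖g (t - b)‖ ^ 2 := by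
  have hmem := memLp_comp_add_right_mul_conj (Lp.memLp f) hg hM b
  have hbounds := hframe _ hmem fun t ht => by rw [hgsupp t ht, map_zero, mul_zero]
  simp only [norm_integral_mul_conj_gaborFn]
  rw [← integral_norm_sq_comp_add_right_mul_conj]
  exact ⟨summable_of_frame_lower_bound hA1 hmem hbounds.1, hbounds⟩

theorem stmt_9_general {d : ℕ}
    (K : Lp ℂ 2 (volume : Measure (EuclideanSpace ℝ (Fin d))) →L[ℂ]
         Lp ℂ 2 (volume : Measure (EuclideanSpace ℝ (Fin d))))
    (a : ℝ) (C : ℤ → EuclideanSpace ℝ (Fin d))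
    (Bmat : EuclideanSpace ℝ (Fin d) ≃L[ℝ] EuclideanSpace ℝ (Fin d))
    (g : EuclideanSpace ℝ (Fin d) → ℂ) (A B A1 B1 : ℝ)
    (hA : 0 < A) (hA1 : 0 < A1) (hB1 : 0 < B1)
    (hgmem : MemLp g 2 (volume : Measure (EuclideanSpace ℝ (Fin d))))
    (hgbdd : ∃ M : ℝ, ∀ t, ‖g t‖ ≤ M)
    (hgsupp : ∀ t : EuclideanSpace ℝ (Fin d), (∃ i, t i ∉ Set.Icc (-a) a) → g t = 0)
    -- `{E_{C_m}}` is a frame for `L²([-a,a]^d)` with bounds `A₁, B₁`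
    (hframe : ∀ h : EuclideanSpace ℝ (Fin d) → ℂ,
      MemLp h 2 (volume : Measure (EuclideanSpace ℝ (Fin d))) →
      (∀ t : EuclideanSpace ℝ (Fin d), (∃ i, t i ∉ Set.Icc (-a) a) → h t = 0) →
      A1 * ∫ t, ‖h t‖ ^ 2 ≤ (∑' m : ℤ, ‖∫ t, h t * (starRingEnd ℂ)
          (Complex.exp (2 * Real.pi * Complex.I * ((inner ℝ (C m) t : ℝ) : ℂ)))‖ ^ 2) ∧
      (∑' m : ℤ, ‖∫ t, h t * (starRingEnd ℂ)
          (Complex.exp (2 * Real.pi * Complex.I * ((inner ℝ (C m) t : ℝ) : ℂ)))‖ ^ 2)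
        ≤ B1 * ∫ t, ‖h t‖ ^ 2)
    -- `A‖K‖² ≤ Σ_n |g(t − Bn)|² ≤ B‖K‖⁻²` a.e.
    (hg : ∀ᵐ t : EuclideanSpace ℝ (Fin d) ∂volume,
      A * ‖K‖ ^ 2 ≤ (∑' n : Fin d → ℤ, ‖g (t - Bmat (WithLp.toLp 2 (fun i => (n i : ℝ))))‖ ^ 2) ∧
      (∑' n : Fin d → ℤ, ‖g (t - Bmat (WithLp.toLp 2 (fun i => (n i : ℝ))))‖ ^ 2) ≤ B * ‖K‖⁻¹ ^ 2) :
    ∀ f : Lp ℂ 2 (volume : Measure (EuclideanSpace ℝ (Fin d))),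
      A1 * A * ‖K.adjoint f‖ ^ 2 ≤ (∑' p : ℤ × (Fin d → ℤ),
          ‖∫ t, f t * (starRingEnd ℂ)
            (gaborFn (C p.1) (Bmat (WithLp.toLp 2 (fun i => ((p.2 i : ℝ))))) g t)‖ ^ 2) ∧
      (∑' p : ℤ × (Fin d → ℤ),
          ‖∫ t, f t * (starRingEnd ℂ)
            (gaborFn (C p.1) (Bmat (WithLp.toLp 2 (fun i => ((p.2 i : ℝ))))) g t)‖ ^ 2)
        ≤ B1 * B * ‖K‖⁻¹ ^ 2 * ‖f‖ ^ 2 := by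
  intro f
  obtain ⟨M, hM⟩ := hgbdd
  let b (n : Fin d → ℤ) : EuclideanSpace ℝ (Fin d) := Bmat (WithLp.toLp 2 fun i => (n i : ℝ))
  have hfiber (n : Fin d → ℤ) := sum_norm_sq_integral_mul_conj_gaborFn_bounds hframe hA1
    hgmem.aestronglyMeasurable hM hgsupp f (b n)
  obtain ⟨s, hs, hs_low, hs_up⟩ := exists_hasSum_integral_mul_between
    (φ := fun t => ‖f t‖ ^ 2) (w := fun n t => ‖g (t - b n)‖ ^ 2)
    ((Lp.memLp f).integrable_norm_pow two_ne_zero) (fun t => sq_nonneg _) (fun n t => sq_nonneg _)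
    (fun n => (hgmem.aestronglyMeasurable.comp_measurePreserving
      (measurePreserving_sub_right volume (b n))).norm.pow 2)
    (summable_norm_sq_comp_sub_lattice hgsupp Bmat) hg
  rw [← L2.norm_sq_eq_integral_norm_sq (𝕜 := ℂ)] at hs_low hs_up
  have hcoeff := tsum_prod_bounds_of_fiberwise (A := A1) (B := B1)
    (c := fun p : ℤ × (Fin d → ℤ) => ‖∫ t, f t * conj (gaborFn (C p.1) (b p.2) g t)‖ ^ 2)
    (fun _ => by positivity) hs
    (fun n => (hfiber n).1) (fun n => (hfiber n).2.1) (fun n => (hfiber n).2.2)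
  have hK : ‖K.adjoint f‖ ≤ ‖K‖ * ‖f‖ := by
    simpa only [ContinuousLinearMap.adjoint.norm_map] using K.adjoint.le_opNorm f
  constructor
  · calc A1 * A * ‖K.adjoint f‖ ^ 2 ≤ A1 * A * (‖K‖ * ‖f‖) ^ 2 := by gcongr
      _ = A1 * (A * ‖K‖ ^ 2 * ‖f‖ ^ 2) := by ring
      _ ≤ A1 * s := by gcongr
      _ ≤ _ := hcoeff.1
  · calc _ ≤ B1 * s := hcoeff.2
      _ ≤ B1 * (B * ‖K‖⁻¹ ^ 2 * ‖f‖ ^ 2) := by gcongr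
      _ = _ := by ring

/-- sufficient conditions for `{E_{C_m}T_{Bn}g}` to be a
`K`-Weyl–Heisenberg frame for `L²(ℝ^d)` with bounds `A₁A`, `B₁B‖K‖⁻²`. -/
theorem stmt_9 {d : ℕ}
    (K : Lp ℂ 2 (volume : Measure (EuclideanSpace ℝ (Fin d))) →L[ℂ]
         Lp ℂ 2 (volume : Measure (EuclideanSpace ℝ (Fin d))))
    (a : ℝ) (ha : 0 < a) (C : ℤ → EuclideanSpace ℝ (Fin d))
    (Bmat : EuclideanSpace ℝ (Fin d) ≃L[ℝ] EuclideanSpace ℝ (Fin d))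
    (g : EuclideanSpace ℝ (Fin d) → ℂ) (A B A1 B1 : ℝ)
    (hA : 0 < A) (hB : 0 < B) (hA1 : 0 < A1) (hB1 : 0 < B1)
    (hgmem : MemLp g 2 (volume : Measure (EuclideanSpace ℝ (Fin d))))
    (hgbdd : ∃ M : ℝ, ∀ t, ‖g t‖ ≤ M)
    (hgsupp : ∀ t : EuclideanSpace ℝ (Fin d), (∃ i, t i ∉ Set.Icc (-a) a) → g t = 0)
    -- `{E_{C_m}}` is a frame for `L²([-a,a]^d)` with bounds `A₁, B₁`
    (hframe : ∀ h : EuclideanSpace ℝ (Fin d) → ℂ,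
      MemLp h 2 (volume : Measure (EuclideanSpace ℝ (Fin d))) →
      (∀ t : EuclideanSpace ℝ (Fin d), (∃ i, t i ∉ Set.Icc (-a) a) → h t = 0) →
      A1 * ∫ t, ‖h t‖ ^ 2 ≤ (∑' m : ℤ, ‖∫ t, h t * (starRingEnd ℂ)
          (Complex.exp (2 * Real.pi * Complex.I * ((inner ℝ (C m) t : ℝ) : ℂ)))‖ ^ 2) ∧
      (∑' m : ℤ, ‖∫ t, h t * (starRingEnd ℂ)
          (Complex.exp (2 * Real.pi * Complex.I * ((inner ℝ (C m) t : ℝ) : ℂ)))‖ ^ 2)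
        ≤ B1 * ∫ t, ‖h t‖ ^ 2)
    -- `A‖K‖² ≤ Σ_n |g(t − Bn)|² ≤ B‖K‖⁻²` a.e.
    (hg : ∀ᵐ t : EuclideanSpace ℝ (Fin d) ∂volume,
      A * ‖K‖ ^ 2 ≤ (∑' n : Fin d → ℤ, ‖g (t - Bmat (WithLp.toLp 2 (fun i => (n i : ℝ))))‖ ^ 2) ∧
      (∑' n : Fin d → ℤ, ‖g (t - Bmat (WithLp.toLp 2 (fun i => (n i : ℝ))))‖ ^ 2) ≤ B * ‖K‖⁻¹ ^ 2) :
    ∀ f : Lp ℂ 2 (volume : Measure (EuclideanSpace ℝ (Fin d))),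
      A1 * A * ‖K.adjoint f‖ ^ 2 ≤ (∑' p : ℤ × (Fin d → ℤ),
          ‖∫ t, f t * (starRingEnd ℂ)
            (gaborFn (C p.1) (Bmat (WithLp.toLp 2 (fun i => ((p.2 i : ℝ))))) g t)‖ ^ 2) ∧
      (∑' p : ℤ × (Fin d → ℤ),
          ‖∫ t, f t * (starRingEnd ℂ)
            (gaborFn (C p.1) (Bmat (WithLp.toLp 2 (fun i => ((p.2 i : ℝ))))) g t)‖ ^ 2)
        ≤ B1 * B * ‖K‖⁻¹ ^ 2 * ‖f‖ ^ 2 :=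
  stmt_9_general K a C Bmat g A B A1 B1 hA hA1 hB1 hgmem hgbdd hgsupp hframe hg
end
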